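/- Let p be an odd prime, l ≥ 1, q = p^l, and α, β ∈ F_{q^2} with γ = β + β^q. Suppose p_{α,β}(t) = t^{q+1} + α^q·t^q + α·t + γ has q+1 distinct roots σ_0, …, σ_q in F_{q^2}, and set P_k = Σ_{i=0}^{q} σ_i^k. Define b : {0,…,p−1} × {0,…,p−1} → F_{q^2} by b(u, v) = Σ_{n=0}^{min(u,v)} (−1)^{u+v−n} · C(u, n) · C(u+v−n, u) · α^{(u−n)q + v−n} · γ^n, where binomial coefficients are reduced into F_{q^2}. Then for all integers i, j with 0 ≤ i, j ≤ q−1, writing i = Σ_{h=0}^{l−1} i_h·p^h and j = Σ_{h=0}^{l−1} j_h·p^h in base p (digits i_h, j_h ∈ {0,…,p−1}), one has P_{jq+i} = Π_{h=0}^{l−1} b(i_h, j_h)^{p^h}. (This is the entrywise form of the identity expressing the q × q matrix (P_{jq+i})_{0≤i,j≤q−1} as the iterated Kronecker product B_1 ⊗ B_2 ⊗ ⋯ ⊗ B_l.) -/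

import Mathlib

/-!
Put `τ = σ + α^q` and `z = α^(q+1) - γ`. Since `x ↦ x^q` is additive and `α^(q^2) = α`, we get
`τ^q = σ^q + α`, so `τ^(q+1) = z` by the defining equation of `σ`: the `τ_m` are `q + 1` distinct
roots of `X^(q+1) = z`, i.e. all of them, and their power sums are
`∑ τ^(qa+e) = δ_{ae} z^a` for `a, e < q`. Expanding `σ^(jq+i) = (τ - α^q)^i (τ^q - α)^j`
binomially then gives `P_{jq+i} = ∑_a C(i,a) C(j,a) (-α^q)^(i-a) (-α)^(j-a) z^a`.
By Lucas' theorem and the Frobenius this sum factors over the base-`p` digits of `i` and `j`,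
and for single digits expanding `z^a = (α^(q+1) - γ)^a` and summing with Vandermonde's identity
gives `b`.
-/

open Finset Polynomial

namespace Nat

theorem sum_range_choose_mul_choose_add (U v n : ℕ) :
    ∑ b ∈ range (U + 1), U.choose b * v.choose (n + b) = (U + v).choose (n + U) := by
  have hvanish : ∑ b ∈ Ico (U + 1) (n + U + 1), U.choose b * v.choose (n + U - b) = 0 :=
    sum_eq_zero fun b hb => by rw [choose_eq_zero_of_lt (mem_Ico.1 hb).1, zero_mul]
  rw [add_choose_eq, Finset.Nat.sum_antidiagonal_eq_sum_range_succ_mk,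
    ← sum_range_add_sum_Ico _ (show U + 1 ≤ n + U + 1 by omega), hvanish, add_zero,
    ← sum_range_reflect]
  refine sum_congr rfl fun b hb => ?_
  have hb : b ≤ U := mem_range_succ_iff.1 hb
  rw [add_tsub_cancel_right, choose_symm hb, show n + (U - b) = n + U - b by omega]

theorem sum_range_choose_mul_choose_mul_choose (u v n : ℕ) :
    ∑ a ∈ range (u + 1), u.choose a * v.choose a * a.choose n =
      u.choose n * (u + v - n).choose u := by
  rcases lt_or_ge u n with hun | hnu
  · rw [choose_eq_zero_of_lt hun, zero_mul]
    exact sum_eq_zero fun a ha => by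
      rw [choose_eq_zero_of_lt (n := a) (by rw [mem_range] at ha; omega), mul_zero]
  obtain ⟨U, rfl⟩ := Nat.exists_eq_add_of_le hnu
  rw [show n + U + 1 = n + (U + 1) by ring, sum_range_add,
    sum_eq_zero fun a ha => by rw [choose_eq_zero_of_lt (mem_range.1 ha), mul_zero], zero_add,
    show n + U + v - n = U + v by omega, ← sum_range_choose_mul_choose_add, mul_sum]
  refine sum_congr rfl fun b _ => ?_
  rw [mul_right_comm, choose_mul (by omega), add_tsub_cancel_left, add_tsub_cancel_left, mul_assoc]

theorem succ_dvd_mul_add_iff {q a e : ℕ} (ha : a ≤ q) (he : e ≤ q) :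
    q + 1 ∣ q * a + e ↔ a = e := by
  refine ⟨fun h => ?_, fun h => ⟨a, by rw [h]; ring⟩⟩
  have hdvd : (q + 1 : ℤ) ∣ e - a := by
    have : ((q * a + e : ℕ) : ℤ) = (q + 1) * a + (e - a) := by push_cast; ring
    exact (Int.dvd_add_right (dvd_mul_right _ _)).1 (this ▸ Int.natCast_dvd_natCast.2 h)
  have := Int.eq_zero_of_abs_lt_dvd hdvd (by rw [abs_lt]; omega)
  omega

end Nat

theorem sum_range_mul_eq_sum_sum {M : Type*} [AddCommMonoid M] (f : ℕ → M) (p n : ℕ) :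
    ∑ a ∈ range (p * n), f a = ∑ b ∈ range n, ∑ c ∈ range p, f (p * b + c) := by
  induction n with
  | zero => simp
  | succ n ih => rw [Nat.mul_succ, sum_range_add, ih, sum_range_succ]

section CommRing
variable {R : Type*} [CommRing R]

/-- The constant term of the Laurent polynomial `(T + x)^i (z T⁻¹ + y)^j`. -/
def diagSum (x y z : R) (i j : ℕ) : R :=
  ∑ a ∈ range (i + 1), (i.choose a * x ^ (i - a)) * (j.choose a * y ^ (j - a)) * z ^ a

theorem diagSum_eq_sum_range (x y z : R) {i N : ℕ} (j : ℕ) (hN : i < N) :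
    diagSum x y z i j =
      ∑ a ∈ range N, (i.choose a * x ^ (i - a)) * (j.choose a * y ^ (j - a)) * z ^ a :=
  sum_subset (range_subset_range.2 hN) fun a _ ha => by
    rw [Nat.choose_eq_zero_of_lt (by simpa using ha), Nat.cast_zero]; ring

theorem sum_add_pow_mul_pow_add_pow {ι : Type*} (s : Finset ι) (τ : ι → R) (x y z : R)
    {q i j : ℕ}
    (hτ : ∀ a ≤ j, ∀ e ≤ i, ∑ m ∈ s, τ m ^ (q * a + e) = if a = e then z ^ a else 0) :
    ∑ m ∈ s, (τ m + x) ^ i * (τ m ^ q + y) ^ j = diagSum x y z i j := by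
  have hexpand : ∀ m ∈ s, (τ m + x) ^ i * (τ m ^ q + y) ^ j =
      ∑ e ∈ range (i + 1), ∑ a ∈ range (j + 1),
        (i.choose e * x ^ (i - e)) * (j.choose a * y ^ (j - a)) * τ m ^ (q * a + e) := by
    intro m _
    rw [add_pow, add_pow, sum_mul_sum]
    refine sum_congr rfl fun e _ => sum_congr rfl fun a _ => ?_
    rw [pow_add, pow_mul]
    ring
  rw [sum_congr rfl hexpand, sum_comm]
  calc ∑ e ∈ range (i + 1), ∑ m ∈ s, ∑ a ∈ range (j + 1),
        (i.choose e * x ^ (i - e)) * (j.choose a * y ^ (j - a)) * τ m ^ (q * a + e)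
      = ∑ e ∈ range (i + 1), ∑ a ∈ range (j + 1),
        (i.choose e * x ^ (i - e)) * (j.choose a * y ^ (j - a)) * if a = e then z ^ a else 0 := by
        refine sum_congr rfl fun e he => ?_
        rw [sum_comm]
        refine sum_congr rfl fun a ha => ?_
        rw [← mul_sum, hτ a (mem_range_succ_iff.1 ha) e (mem_range_succ_iff.1 he)]
    _ = diagSum x y z i j := by
        refine sum_congr rfl fun e _ => ?_
        simp only [mul_ite, mul_zero, sum_ite_eq', mem_range]
        split_ifs with he
        · rfl
        · rw [Nat.choose_eq_zero_of_lt (n := j) (by omega)]; simp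

theorem diagSum_mul_sub (x y g : R) (u v : ℕ) :
    diagSum x y (x * y - g) u v =
      ∑ n ∈ range (u + 1), (u.choose n * (u + v - n).choose u : ℕ) *
        (x ^ (u - n) * y ^ (v - n) * (-g) ^ n) := by
  have hterm : ∀ a ∈ range (u + 1), ∀ n ∈ range (u + 1),
      (u.choose a * x ^ (u - a)) * (v.choose a * y ^ (v - a)) *
          ((-g) ^ n * (x * y) ^ (a - n) * a.choose n) =
        (u.choose a * v.choose a * a.choose n : ℕ) * (x ^ (u - n) * y ^ (v - n) * (-g) ^ n) := by
    intro a ha n _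
    rcases lt_or_ge v a with hva | hav
    · simp [Nat.choose_eq_zero_of_lt hva]
    rcases lt_or_ge a n with han | hna
    · simp [Nat.choose_eq_zero_of_lt han]
    have hau : a ≤ u := mem_range_succ_iff.1 ha
    rw [show u - n = u - a + (a - n) by omega, show v - n = v - a + (a - n) by omega,
      pow_add, pow_add, mul_pow]
    push_cast
    ring
  calc diagSum x y (x * y - g) u v
      = ∑ a ∈ range (u + 1), ∑ n ∈ range (u + 1),
          (u.choose a * v.choose a * a.choose n : ℕ) *
            (x ^ (u - n) * y ^ (v - n) * (-g) ^ n) := by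
        refine sum_congr rfl fun a ha => ?_
        rw [sub_eq_neg_add, add_pow, mul_sum, ← sum_congr rfl (hterm a ha)]
        exact sum_subset (range_subset_range.2 (by simpa using ha)) fun n _ hn => by
          rw [Nat.choose_eq_zero_of_lt (n := a) (by simpa using hn), Nat.cast_zero, mul_zero,
            mul_zero]
    _ = _ := by
        rw [sum_comm]
        refine sum_congr rfl fun n _ => ?_
        rw [← sum_mul, ← Nat.cast_sum, Nat.sum_range_choose_mul_choose_mul_choose]

theorem diagSum_neg_pow_neg_pow_sub (α g : R) (q u v : ℕ) :
    diagSum (-α ^ q) (-α) (α ^ (q + 1) - g) u v =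
      ∑ n ∈ range (min u v + 1), (-1) ^ (u + v - n) * (u.choose n : R) *
        ((u + v - n).choose u : R) * α ^ ((u - n) * q + (v - n)) * g ^ n := by
  have hvanish : ∀ n ∈ range (u + 1), n ∉ range (min u v + 1) →
      ((u.choose n * (u + v - n).choose u : ℕ) : R) *
        ((-α ^ q) ^ (u - n) * (-α) ^ (v - n) * (-g) ^ n) = 0 := by
    intro n hn hnv
    simp only [mem_range] at hn hnv
    rw [Nat.choose_eq_zero_of_lt (n := u + v - n) (by omega), mul_zero, Nat.cast_zero, zero_mul]
  rw [show α ^ (q + 1) = -α ^ q * -α by ring, diagSum_mul_sub,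
    ← sum_subset (range_subset_range.2 (by omega)) hvanish]
  refine sum_congr rfl fun n hn => ?_
  have hnu : n ≤ u := (mem_range_succ_iff.1 hn).trans (min_le_left u v)
  have hnv : n ≤ v := (mem_range_succ_iff.1 hn).trans (min_le_right u v)
  rw [show u + v - n = u - n + (v - n) + n by omega, pow_add, pow_add, pow_add, pow_mul',
    neg_pow, neg_pow α, neg_pow g]
  push_cast
  ring

end CommRing

section CharP
variable {R : Type*} [CommRing R] {p : ℕ} [Fact p.Prime] [CharP R p]

theorem natCast_choose_mul_add (i b c : ℕ) (hc : c < p) :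
    (i.choose (p * b + c) : R) = (i % p).choose c * (i / p).choose b := by
  have hlucas := Choose.choose_modEq_choose_mod_mul_choose_div_nat (n := i) (k := p * b + c) (p := p)
  rw [Nat.mul_add_mod, Nat.mod_eq_of_lt hc, Nat.mul_add_div (by omega), Nat.div_eq_of_lt hc,
    add_zero] at hlucas
  rw [← Nat.cast_mul, CharP.natCast_eq_natCast R p]
  exact hlucas

include p in
theorem natCast_pow_char (n : ℕ) : (n : R) ^ p = n := by
  rw [← frobenius_def, map_natCast]

theorem choose_mul_pow_sub_mul_add (x : R) (i b c : ℕ) (hc : c < p) :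
    (i.choose (p * b + c) : R) * x ^ (i - (p * b + c)) =
      ((i % p).choose c * x ^ (i % p - c)) * ((i / p).choose b * x ^ (i / p - b)) ^ p := by
  rw [natCast_choose_mul_add i b c hc]
  rcases lt_or_ge (i % p) c with hci | hci
  · simp [Nat.choose_eq_zero_of_lt hci]
  rcases lt_or_ge (i / p) b with hbi | hbi
  · simp [Nat.choose_eq_zero_of_lt hbi, (Fact.out : p.Prime).ne_zero]
  have hexp : i - (p * b + c) = i % p - c + p * (i / p - b) := by
    have := Nat.mod_add_div i p
    have := Nat.mul_sub p (i / p) b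
    have := Nat.mul_le_mul_left p hbi
    omega
  rw [hexp, mul_pow, natCast_pow_char, pow_add, pow_mul']
  ring

theorem diagSum_eq_mul_pow (x y z : R) (i j : ℕ) :
    diagSum x y z i j = diagSum x y z (i % p) (j % p) * diagSum x y z (i / p) (j / p) ^ p := by
  have hp : 0 < p := (Fact.out : p.Prime).pos
  rw [diagSum_eq_sum_range x y z j (Nat.lt_mul_div_succ i hp), sum_range_mul_eq_sum_sum,
    diagSum_eq_sum_range x y z (j % p) (Nat.mod_lt i hp), diagSum, sum_pow_char, mul_comm,
    sum_mul_sum]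
  refine sum_congr rfl fun b _ => sum_congr rfl fun c hc => ?_
  have hc : c < p := mem_range.1 hc
  rw [choose_mul_pow_sub_mul_add x i b c hc, choose_mul_pow_sub_mul_add y j b c hc, pow_add,
    pow_mul']
  ring

theorem diagSum_eq_prod_digits (x y z : R) {n i j : ℕ} (hi : i < p ^ n) (hj : j < p ^ n) :
    diagSum x y z i j = ∏ h ∈ range n, diagSum x y z (i / p ^ h % p) (j / p ^ h % p) ^ p ^ h := by
  induction n generalizing i j with
  | zero =>
    obtain rfl : i = 0 := by simpa using hi
    obtain rfl : j = 0 := by simpa using hj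
    simp [diagSum]
  | succ n ih =>
    have hp : 0 < p := (Fact.out : p.Prime).pos
    have hdiv {k : ℕ} (hk : k < p ^ (n + 1)) : k / p < p ^ n := by
      rwa [Nat.div_lt_iff_lt_mul hp, ← pow_succ]
    rw [diagSum_eq_mul_pow, ih (hdiv hi) (hdiv hj), prod_range_succ', ← prod_pow, mul_comm]
    simp only [Nat.div_div_eq_div_mul, ← pow_succ', ← pow_mul, ← pow_succ, pow_zero, pow_one,
      Nat.div_one]

end CharP

theorem FiniteField.exists_isPrimitiveRoot_of_dvd {K : Type*} [Field K] [Fintype K] {n : ℕ}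
    (hn : n ∣ Fintype.card K - 1) : ∃ ζ : K, IsPrimitiveRoot ζ n := by
  classical
  obtain ⟨g, hg⟩ := IsCyclic.exists_ofOrder_eq_natCard (α := Kˣ)
  rw [Nat.card_eq_fintype_card, Fintype.card_units] at hg
  obtain ⟨m, hm⟩ := hn
  have hm0 : m ≠ 0 := by
    rintro rfl
    have := Fintype.one_lt_card (α := K)
    omega
  have hζ := (IsPrimitiveRoot.orderOf g).pow_of_dvd hm0 (by rw [hg, hm]; exact dvd_mul_left m n)
  rw [hg, hm, Nat.mul_div_cancel _ (Nat.pos_of_ne_zero hm0)] at hζ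
  exact ⟨_, IsPrimitiveRoot.coe_units_iff.2 hζ⟩

theorem map_univ_eq_nthRoots {K : Type*} [Field K] {n : ℕ} {c : K} {τ : Fin n → K}
    (hinj : Function.Injective τ) (hτ : ∀ m, τ m ^ n = c) :
    univ.val.map τ = nthRoots n c := by
  rcases Nat.eq_zero_or_pos n with rfl | hn
  · simp
  refine Multiset.eq_of_le_of_card_le ((Multiset.le_iff_subset (univ.nodup.map hinj)).2 ?_) ?_
  · intro x hx
    obtain ⟨m, -, rfl⟩ := Multiset.mem_map.1 hx
    exact (mem_nthRoots hn).2 (hτ m)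
  · simpa using card_nthRoots n c

theorem IsPrimitiveRoot.sum_pow_of_injective {K : Type*} [Field K] {n : ℕ} {ζ : K}
    (hζ : IsPrimitiveRoot ζ n) {c : K} {τ : Fin n → K} (hinj : Function.Injective τ)
    (hτ : ∀ m, τ m ^ n = c) (k : ℕ) :
    ∑ m, τ m ^ k = if n ∣ k then n * c ^ (k / n) else 0 := by
  rcases Nat.eq_zero_or_pos n with rfl | hn
  · simp
  have hsum : ∑ m, τ m ^ k = τ ⟨0, hn⟩ ^ k * ∑ i ∈ range n, (ζ ^ k) ^ i := by
    have hmap : ∑ m, τ m ^ k = ((univ.val.map τ).map (fun x : K => x ^ k)).sum := by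
      rw [Multiset.map_map, sum_eq_multiset_sum]; rfl
    rw [hmap, map_univ_eq_nthRoots hinj hτ, hζ.nthRoots_eq (hτ _), Multiset.map_map, mul_sum,
      sum_eq_multiset_sum]
    refine congrArg _ (Multiset.map_congr rfl fun i _ => ?_)
    simp only [Function.comp_apply]
    ring
  split_ifs with hk
  · obtain ⟨d, rfl⟩ := hk
    rw [hsum, pow_mul ζ, hζ.pow_eq_one, pow_mul, hτ, Nat.mul_div_cancel_left d hn]
    simp [mul_comm]
  · have hζk : ζ ^ k ≠ 1 := fun h => hk ((hζ.pow_eq_one_iff_dvd k).1 h)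
    rw [hsum, geom_sum_eq hζk, ← pow_mul, mul_comm k n, pow_mul, hζ.pow_eq_one, one_pow, sub_self,
      zero_div, mul_zero]

section FiniteField
variable {F : Type*} [Field F] [Fintype F] {p l q : ℕ} [Fact p.Prime] [CharP F p]

theorem add_pow_pow_eq_pow_add (hq : q = p ^ l) (hF : Fintype.card F = q ^ 2) (σ α : F) :
    (σ + α ^ q) ^ q = σ ^ q + α := by
  subst hq
  rw [add_pow_char_pow, ← pow_mul, ← sq, ← hF, FiniteField.pow_card]

theorem sum_add_pow_pow_eq_ite (hq : q = p ^ l) (hF : Fintype.card F = q ^ 2) {α g : F}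
    {σ : Fin (q + 1) → F} (hinj : Function.Injective σ)
    (hroot : ∀ m, σ m ^ (q + 1) + α ^ q * σ m ^ q + α * σ m + g = 0) {a e : ℕ}
    (ha : a ≤ q) (he : e ≤ q) :
    ∑ m, (σ m + α ^ q) ^ (q * a + e) = if a = e then (α ^ (q + 1) - g) ^ a else 0 := by
  have hτ (m : Fin (q + 1)) : (σ m + α ^ q) ^ (q + 1) = α ^ (q + 1) - g := by
    rw [pow_succ, add_pow_pow_eq_pow_add hq hF]
    linear_combination hroot m
  have hq0 : (q : F) = 0 := by
    simpa [hF] using FiniteField.cast_card_eq_zero F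
  obtain ⟨ζ, hζ⟩ := FiniteField.exists_isPrimitiveRoot_of_dvd (K := F) (n := q + 1)
    ⟨q - 1, by rw [hF, ← Nat.sq_sub_sq, one_pow]⟩
  rw [hζ.sum_pow_of_injective (fun m m' h => hinj (add_right_cancel h)) hτ]
  simp only [Nat.succ_dvd_mul_add_iff ha he]
  split_ifs with hae
  · subst hae
    rw [show q * a + a = (q + 1) * a by ring, Nat.mul_div_cancel_left _ q.succ_pos]
    push_cast
    rw [hq0, zero_add, one_mul]
  · rfl

end FiniteField

theorem powerSum_kronecker_general (p l q : ℕ) (hp : p.Prime)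
    (hq : q = p ^ l) (F : Type*) [Field F] [Fintype F] (hF : Fintype.card F = q ^ 2)
    (α β : F) (σ : Fin (q + 1) → F) (hσinj : Function.Injective σ)
    (hσroot : ∀ i, (σ i) ^ (q + 1) + α ^ q * (σ i) ^ q + α * (σ i) + (β + β ^ q) = 0)
    (b : ℕ → ℕ → F)
    (hb : ∀ u v, u ≤ p - 1 → v ≤ p - 1 →
      b u v = ∑ n ∈ Finset.range (min u v + 1),
        (-1) ^ (u + v - n) * (u.choose n : F) * ((u + v - n).choose u : F) *
          α ^ ((u - n) * q + (v - n)) * (β + β ^ q) ^ n) :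
    ∀ i j : ℕ, i ≤ q - 1 → j ≤ q - 1 →
      (∑ m, σ m ^ (j * q + i)) =
        ∏ h ∈ Finset.range l, (b (i / p ^ h % p) (j / p ^ h % p)) ^ (p ^ h) := by
  intro i j hi hj
  have := Fact.mk hp
  have : CharP F p := charP_of_card_eq_prime_pow (f := l * 2) (by rw [hF, hq, ← pow_mul])
  have hq0 : 0 < q := hq ▸ pow_pos hp.pos l
  have hdigit (k h : ℕ) : k / p ^ h % p ≤ p - 1 := Nat.le_sub_one_of_lt (Nat.mod_lt _ hp.pos)
  calc ∑ m, σ m ^ (j * q + i)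
      = ∑ m, ((σ m + α ^ q) + -α ^ q) ^ i * ((σ m + α ^ q) ^ q + -α) ^ j := by
        refine sum_congr rfl fun m _ => ?_
        rw [add_pow_pow_eq_pow_add hq hF, pow_add, pow_mul]
        ring
    _ = diagSum (-α ^ q) (-α) (α ^ (q + 1) - (β + β ^ q)) i j :=
        sum_add_pow_mul_pow_add_pow _ _ _ _ _ fun a ha e he =>
          sum_add_pow_pow_eq_ite hq hF hσinj hσroot (by omega) (by omega)
    _ = ∏ h ∈ range l,
          diagSum (-α ^ q) (-α) (α ^ (q + 1) - (β + β ^ q)) (i / p ^ h % p) (j / p ^ h % p) ^ p ^ h :=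
        diagSum_eq_prod_digits _ _ _ (by omega) (by omega)
    _ = _ := prod_congr rfl fun h _ => by
        rw [hb _ _ (hdigit i h) (hdigit j h), diagSum_neg_pow_neg_pow_sub]

/-- Lemma 7 (entrywise Kronecker-product identity): writing `i` and `j` in base `p`
with digits `i_h, j_h`, the power sums of the `q+1` distinct roots of `p_{α,β}` satisfy
`P_{jq+i} = Π_{h=0}^{l-1} b(i_h, j_h)^(p^h)`, where
`b(u,v) = Σ_{n=0}^{min(u,v)} (-1)^(u+v-n) C(u,n) C(u+v-n,u) α^((u-n)q+v-n) γ^n`. -/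
theorem powerSum_kronecker (p l q : ℕ) (hp : p.Prime) (hodd : Odd p) (hl : 1 ≤ l)
    (hq : q = p ^ l) (F : Type*) [Field F] [Fintype F] (hF : Fintype.card F = q ^ 2)
    (α β : F) (σ : Fin (q + 1) → F) (hσinj : Function.Injective σ)
    (hσroot : ∀ i, (σ i) ^ (q + 1) + α ^ q * (σ i) ^ q + α * (σ i) + (β + β ^ q) = 0)
    (b : ℕ → ℕ → F)
    (hb : ∀ u v, u ≤ p - 1 → v ≤ p - 1 →
      b u v = ∑ n ∈ Finset.range (min u v + 1),
        (-1) ^ (u + v - n) * (u.choose n : F) * ((u + v - n).choose u : F) *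
          α ^ ((u - n) * q + (v - n)) * (β + β ^ q) ^ n) :
    ∀ i j : ℕ, i ≤ q - 1 → j ≤ q - 1 →
      (∑ m, σ m ^ (j * q + i)) =
        ∏ h ∈ Finset.range l, (b (i / p ^ h % p) (j / p ^ h % p)) ^ (p ^ h) :=
  powerSum_kronecker_general p l q hp hq F hF α β σ hσinj hσroot b hb
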